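/- arXiv:math/0601156 — 2 statements merged into one kernel-verified Lean document; each statement's English description precedes it below -/
import Mathlib

section
/- If R: 𝔤 → 𝔤 is a linear map on a Lie algebra 𝔤 satisfying the modified Yang-Baxter equation [R(A),R(B)] − R([R(A),B] + [A,R(B)]) = −[A,B], then [A,B]_R := ½([R(A),B] + [A,R(B)]) defines a Lie bracket on 𝔤 (it is bilinear, antisymmetric, and satisfies the Jacobi identity). -/
/-!
The modified Yang–Baxter equation says exactly that `R` turns the `R`-bracket into half the sum
of the two brackets `[R A, R B]` and `[A, B]`. Substituting this into a double `R`-bracket expands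
`[A, [B, C]_R]_R` into a quarter of the brackets of `A, B, C, R A, R B, R C` in which `R` is applied
to none or to exactly two of the three arguments; their cyclic sum splits into the Jacobi identities
of `(R A, R B, C)`, `(R B, R C, A)`, `(R C, R A, B)` and `(A, B, C)`.
-/

noncomputable section

/-- The R-bracket `[A,B]_R = ½([R(A),B] + [A,R(B)])`. -/
def rBr {L : Type*} [LieRing L] [LieAlgebra ℝ L] (R : L →ₗ[ℝ] L) (A B : L) : L :=
  (2 : ℝ)⁻¹ • (⁅R A, B⁆ + ⁅A, R B⁆)

namespace RBracket

variable {L : Type*} [LieRing L] [LieAlgebra ℝ L] (R : L →ₗ[ℝ] L)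

def SatisfiesMYBE : Prop :=
  ∀ A B : L, ⁅R A, R B⁆ - R (⁅R A, B⁆ + ⁅A, R B⁆) = -⁅A, B⁆

theorem rBr_add_left (A A' B : L) : rBr R (A + A') B = rBr R A B + rBr R A' B := by
  simp only [rBr, map_add, add_lie]
  module

theorem rBr_add_right (A B B' : L) : rBr R A (B + B') = rBr R A B + rBr R A B' := by
  simp only [rBr, map_add, lie_add]
  module

theorem rBr_smul_left (c : ℝ) (A B : L) : rBr R (c • A) B = c • rBr R A B := by
  simp only [rBr, map_smul, smul_lie, ← smul_add, smul_comm c]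

theorem rBr_smul_right (c : ℝ) (A B : L) : rBr R A (c • B) = c • rBr R A B := by
  simp only [rBr, map_smul, lie_smul, ← smul_add, smul_comm c]

theorem rBr_skew (A B : L) : -rBr R B A = rBr R A B := by
  rw [rBr, rBr, ← smul_neg, neg_add, lie_skew, lie_skew, add_comm]

variable {R}

theorem map_rBr (hR : SatisfiesMYBE R) (A B : L) :
    R (rBr R A B) = (2 : ℝ)⁻¹ • (⁅R A, R B⁆ + ⁅A, B⁆) := by
  rw [rBr, map_smul, eq_add_of_sub_eq' (hR A B)]
  abel_nf

theorem rBr_rBr (hR : SatisfiesMYBE R) (A B C : L) :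
    rBr R A (rBr R B C) =
      (4 : ℝ)⁻¹ • (⁅R A, ⁅R B, C⁆⁆ + ⁅R A, ⁅B, R C⁆⁆ + ⁅A, ⁅R B, R C⁆⁆ + ⁅A, ⁅B, C⁆⁆) := by
  rw [rBr, map_rBr hR, rBr]
  simp only [lie_smul, lie_add]
  module

theorem rBr_jacobi (hR : SatisfiesMYBE R) (A B C : L) :
    rBr R A (rBr R B C) + rBr R B (rBr R C A) + rBr R C (rBr R A B) = 0 := by
  rw [rBr_rBr hR, rBr_rBr hR, rBr_rBr hR]
  linear_combination (norm := module) (4 : ℝ)⁻¹ •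
    (lie_jacobi (R A) (R B) C + lie_jacobi (R B) (R C) A + lie_jacobi (R C) (R A) B +
      lie_jacobi A B C)

end RBracket

open RBracket in
/-- if `R` satisfies the modified Yang-Baxter equation, then the R-bracket
is a Lie bracket: bilinear, antisymmetric, and satisfying the Jacobi identity. -/
theorem mYBE_gives_lie_bracket
    {L : Type*} [LieRing L] [LieAlgebra ℝ L] (R : L →ₗ[ℝ] L)
    (hR : ∀ A B : L, ⁅R A, R B⁆ - R (⁅R A, B⁆ + ⁅A, R B⁆) = -⁅A, B⁆) :
    (∀ A A' B : L, rBr R (A + A') B = rBr R A B + rBr R A' B) ∧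
    (∀ (c : ℝ) (A B : L), rBr R (c • A) B = c • rBr R A B) ∧
    (∀ A B B' : L, rBr R A (B + B') = rBr R A B + rBr R A B') ∧
    (∀ (c : ℝ) (A B : L), rBr R A (c • B) = c • rBr R A B) ∧
    (∀ A B : L, rBr R A B = - rBr R B A) ∧
    (∀ A B C : L, rBr R A (rBr R B C) + rBr R B (rBr R C A) + rBr R C (rBr R A B) = 0) :=
  ⟨rBr_add_left R, rBr_smul_left R, rBr_add_right R, rBr_smul_right R,
    fun A B => (rBr_skew R A B).symm, rBr_jacobi hR⟩
end
end

section
/- Let a, b: ℝ → ℝ and let K be the Hilbert-Schmidt operator with single-pair kernel K(x,y) = a(x)b(y) for x ≤ y and a(y)b(x) for x > y. If g₋ = I + A with A a lower-triangular Volterra Hilbert-Schmidt operator, then the 𝔩*-projection Π*_𝔩(g₋⁻¹∘K∘g₋) again has a single-pair kernel, namely (g₋⁻¹a)(x)(g₋*b)(y) for x ≤ y and (g₋⁻¹a)(y)(g₋*b)(x) for x > y. -/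
/-!
For `x < y`, lower triangularity of `C` and `A` means that in the `(x, y)` entry of
`(I + C) K (I + A)` only `K(w, z)` with `w ≤ x < y ≤ z` is ever evaluated, and there
`K(w, z) = a w * b z` factorizes; so the upper triangle is that of the single-pair kernel of
`(I + C) a` and `(I + A)ᵀ b`, and `Π_𝔩*` reflects it to the lower triangle.
-/

open MeasureTheory

noncomputable section

/-- The single-pair kernel built from `a` and `b`. -/
def spKer (a b : ℝ → ℝ) (x y : ℝ) : ℝ := if x ≤ y then a x * b y else a y * b x

/-- Kernel of the dual projection `Π_𝔩*`: `A(x,y) χ_{y>x} + A(y,x) χ_{y<x}`. -/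
def dualProjL (A : ℝ → ℝ → ℝ) (x y : ℝ) : ℝ :=
  (if x < y then A x y else 0) + (if y < x then A y x else 0)

/-- The kernel of `(I + C) ∘ K ∘ (I + A)`. -/
def conjKer (C A K : ℝ → ℝ → ℝ) (u v : ℝ) : ℝ :=
  K u v + (∫ z : ℝ, C u z * K z v) + (∫ z : ℝ, K u z * A z v) +
    ∫ z : ℝ, (∫ w : ℝ, C u w * K w z) * A z v

theorem spKer_of_le (a b : ℝ → ℝ) {x y : ℝ} (h : x ≤ y) : spKer a b x y = a x * b y :=
  if_pos h

theorem spKer_comm (a b : ℝ → ℝ) (x y : ℝ) : spKer a b y x = spKer a b x y := by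
  rcases le_total x y with h | h
  · rcases h.eq_or_lt with rfl | h
    · rfl
    · rw [spKer, if_neg h.not_ge, spKer_of_le a b h.le]
  · rcases h.eq_or_lt with rfl | h
    · rfl
    · rw [spKer, if_pos h.le, spKer, if_neg h.not_ge]

theorem dualProjL_eq_spKer {F : ℝ → ℝ → ℝ} {a b : ℝ → ℝ}
    (hF : ∀ x y, x < y → F x y = spKer a b x y) {x y : ℝ} (hxy : x ≠ y) :
    dualProjL F x y = spKer a b x y := by
  rcases hxy.lt_or_gt with h | h
  · rw [dualProjL, if_pos h, if_neg h.not_gt, add_zero, hF x y h]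
  · rw [dualProjL, if_neg h.not_gt, if_pos h, zero_add, hF y x h, spKer_comm]

section LowerTriangular

variable {μ : Measure ℝ} {C A : ℝ → ℝ → ℝ}

theorem integral_lower_mul_congr (hC : ∀ x w, x < w → C x w = 0) {x : ℝ} {f g : ℝ → ℝ}
    (hfg : ∀ w, w ≤ x → f w = g w) :
    ∫ w, C x w * f w ∂μ = ∫ w, C x w * g w ∂μ := by
  congr 1
  funext w
  by_cases hw : w ≤ x
  · rw [hfg w hw]
  · rw [hC x w (lt_of_not_ge hw), zero_mul, zero_mul]

theorem integral_mul_lower_congr (hA : ∀ z y, z < y → A z y = 0) {y : ℝ} {f g : ℝ → ℝ}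
    (hfg : ∀ z, y ≤ z → f z = g z) :
    ∫ z, f z * A z y ∂μ = ∫ z, g z * A z y ∂μ := by
  congr 1
  funext z
  by_cases hz : y ≤ z
  · rw [hfg z hz]
  · rw [hA z y (lt_of_not_ge hz), mul_zero, mul_zero]

theorem integral_lower_mul_spKer (hC : ∀ x w, x < w → C x w = 0) (a b : ℝ → ℝ) {x y : ℝ}
    (hxy : x ≤ y) :
    ∫ w, C x w * spKer a b w y ∂μ = (∫ w, C x w * a w ∂μ) * b y := by
  rw [integral_lower_mul_congr hC fun w hw => spKer_of_le a b (hw.trans hxy),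
    ← integral_mul_const]
  simp_rw [mul_assoc]

theorem integral_spKer_mul_lower (hA : ∀ z y, z < y → A z y = 0) (a b : ℝ → ℝ) {x y : ℝ}
    (hxy : x ≤ y) :
    ∫ z, spKer a b x z * A z y ∂μ = a x * ∫ z, A z y * b z ∂μ := by
  rw [integral_mul_lower_congr hA fun z hz => spKer_of_le a b (hxy.trans hz),
    ← integral_const_mul]
  simp_rw [mul_assoc, mul_comm (b _)]

theorem conjKer_spKer_of_le (hC : ∀ x w, x < w → C x w = 0) (hA : ∀ z y, z < y → A z y = 0)
    (a b : ℝ → ℝ) {x y : ℝ} (hxy : x ≤ y) :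
    conjKer C A (spKer a b) x y =
      spKer (fun u => a u + ∫ z, C u z * a z) (fun v => b v + ∫ z, A z v * b z) x y := by
  have hCK : ∫ z, (∫ w, C x w * spKer a b w z) * A z y =
      ∫ z, spKer (fun u => ∫ w, C u w * a w) b x z * A z y :=
    integral_mul_lower_congr hA fun z hz => by
      rw [integral_lower_mul_spKer hC a b (hxy.trans hz), spKer_of_le _ b (hxy.trans hz)]
  rw [conjKer, hCK, spKer_of_le a b hxy, integral_lower_mul_spKer hC a b hxy,
    integral_spKer_mul_lower hA a b hxy, integral_spKer_mul_lower hA _ b hxy, spKer_of_le _ _ hxy]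
  ring

end LowerTriangular

theorem single_pair_kernels_invariant_general
    (a b : ℝ → ℝ) (A C : ℝ → ℝ → ℝ)
    (hAsupp : ∀ x y : ℝ, x < y → A x y = 0)
    (hCsupp : ∀ x y : ℝ, x < y → C x y = 0) :
    ∀ x y : ℝ, x ≠ y →
      dualProjL
        (fun u v =>
          spKer a b u v + (∫ z : ℝ, C u z * spKer a b z v) +
            (∫ z : ℝ, spKer a b u z * A z v) +
            ∫ z : ℝ, (∫ w : ℝ, C u w * spKer a b w z) * A z v)
        x y
      = spKer (fun u => a u + ∫ z : ℝ, C u z * a z)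
          (fun v => b v + ∫ z : ℝ, A z v * b z) x y := fun _ _ hxy =>
  dualProjL_eq_spKer (F := conjKer C A (spKer a b))
    (fun _ _ h => conjKer_spKer_of_le hCsupp hAsupp a b h.le) hxy

/-- `Π_𝔩*(g₋⁻¹ ∘ K ∘ g₋)` of a single-pair kernel is again a single-pair
kernel, built from `g₋⁻¹ a` and `g₋* b`, where `g₋ = I + A` and `g₋⁻¹ = I + C`. -/
theorem single_pair_kernels_invariant
    (a b : ℝ → ℝ) (A C : ℝ → ℝ → ℝ)
    (hA : MemLp (fun p : ℝ × ℝ => A p.1 p.2) 2 (volume : Measure (ℝ × ℝ)))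
    (hC : MemLp (fun p : ℝ × ℝ => C p.1 p.2) 2 (volume : Measure (ℝ × ℝ)))
    (hAsupp : ∀ x y : ℝ, x < y → A x y = 0)
    (hCsupp : ∀ x y : ℝ, x < y → C x y = 0)
    -- `(I + A)(I + C) = I` and `(I + C)(I + A) = I` at the level of kernels
    (hinv1 : ∀ x y : ℝ, A x y + C x y + ∫ z : ℝ, A x z * C z y = 0)
    (hinv2 : ∀ x y : ℝ, A x y + C x y + ∫ z : ℝ, C x z * A z y = 0)
    -- the single-pair kernel is Hilbert-Schmidt
    (hK : MemLp (fun p : ℝ × ℝ => spKer a b p.1 p.2) 2 (volume : Measure (ℝ × ℝ))) :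
    ∀ x y : ℝ, x ≠ y →
      dualProjL
        (fun u v =>
          spKer a b u v + (∫ z : ℝ, C u z * spKer a b z v) +
            (∫ z : ℝ, spKer a b u z * A z v) +
            ∫ z : ℝ, (∫ w : ℝ, C u w * spKer a b w z) * A z v)
        x y
      = spKer (fun u => a u + ∫ z : ℝ, C u z * a z)
          (fun v => b v + ∫ z : ℝ, A z v * b z) x y :=
  single_pair_kernels_invariant_general a b A C hAsupp hCsupp
end
end
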